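/- Every graph G on n vertices with average degree at most d, where d ≥ 2 and n ≥ 48d, has vertex integrity ι(G) ≤ (1 - (log d)/(4d)) · n. -/

import Mathlib

open SimpleGraph

/-- The maximum size of a connected component of a graph. -/
noncomputable def maxCompCard {W : Type*} (H : SimpleGraph W) : ℕ :=
  sSup {m | ∃ c : H.ConnectedComponent, m = c.supp.ncard}

/-- The vertex integrity of a graph. -/
noncomputable def integrity {V : Type*} [Fintype V] (G : SimpleGraph V) : ℕ :=
  sInf {m | ∃ S : Finset V, m = S.card + maxCompCard (G.induce ((↑S : Set V)ᶜ))}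

open Finset Real
set_option maxHeartbeats 1000000
set_option linter.unusedVariables false
set_option linter.unnecessarySimpa false

lemma maxCompCard_le {W : Type*} (H : SimpleGraph W) (M : ℕ)
    (h : ∀ c : H.ConnectedComponent, c.supp.ncard ≤ M) : maxCompCard H ≤ M := by
  unfold maxCompCard
  rcases Set.eq_empty_or_nonempty {m | ∃ c : H.ConnectedComponent, m = c.supp.ncard} with he | hne
  · rw [he, csSup_empty]; exact Nat.zero_le M
  · exact csSup_le hne (by rintro m ⟨c, rfl⟩; exact h c)

lemma walk_stay {V : Type*} [DecidableEq V] (G : SimpleGraph V) (A R : Finset V)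
    (hAR : ∀ a ∈ A, ∀ r ∈ R, ¬ G.Adj a r)
    (X : Set V) (hX : X = ↑(A ∪ R)) :
    ∀ {x y : X}, (G.induce X).Walk x y → (x : V) ∈ A → (y : V) ∈ A := by
  intro x y w
  induction w with
  | nil => exact id
  | @cons u b y h p ih =>
    intro hu
    apply ih
    have hadj : G.Adj (u : V) (b : V) := h
    have hb : (b : V) ∈ A ∪ R := by
      have h2 : (b : V) ∈ (↑(A ∪ R) : Set V) := by rw [← hX]; exact b.2
      exact_mod_cast h2
    rcases Finset.mem_union.mp hb with hbA | hbR
    · exact hbA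
    · exact absurd hadj (hAR _ hu _ hbR)

lemma comp_supp_le {V : Type*} [Fintype V] [DecidableEq V] (G : SimpleGraph V)
    (A R : Finset V)
    (hAR : ∀ a ∈ A, ∀ r ∈ R, ¬ G.Adj a r)
    (c : (G.induce (↑(A ∪ R) : Set V)).ConnectedComponent) :
    c.supp.ncard ≤ max A.card R.card := by
  obtain ⟨v, rfl⟩ := c.exists_rep
  have hAR' : ∀ r ∈ R, ∀ a ∈ A, ¬ G.Adj r a := fun r hr a ha hadj =>
    hAR a ha r hr hadj.symm
  have key : ∀ (B C : Finset V), (↑(A ∪ R) : Set V) = ↑(B ∪ C) →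
      (∀ b ∈ B, ∀ cc ∈ C, ¬ G.Adj b cc) → (v : V) ∈ B →
      ((G.induce (↑(A ∪ R) : Set V)).connectedComponentMk v).supp.ncard ≤ B.card := by
    intro B C hBC hB hvB
    have hsub : ((G.induce (↑(A ∪ R) : Set V)).connectedComponentMk v).supp ⊆
        {w : (↑(A ∪ R) : Set V) | (w : V) ∈ B} := by
      intro w hw
      have hmk := (SimpleGraph.ConnectedComponent.mem_supp_iff _ _).mp hw
      have hreach : (G.induce (↑(A ∪ R) : Set V)).Reachable v w :=
        (SimpleGraph.ConnectedComponent.eq.mp hmk).symm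
      obtain ⟨p⟩ := hreach
      exact walk_stay G B C hB _ hBC p hvB
    calc ((G.induce (↑(A ∪ R) : Set V)).connectedComponentMk v).supp.ncard
        = (Subtype.val '' ((G.induce (↑(A ∪ R) : Set V)).connectedComponentMk v).supp).ncard :=
          (Set.ncard_image_of_injective _ Subtype.val_injective).symm
      _ ≤ (↑B : Set V).ncard := by
          apply Set.ncard_le_ncard _ (B.finite_toSet)
          rintro _ ⟨w, hw, rfl⟩
          exact hsub hw
      _ = B.card := Set.ncard_coe_finset B
  have hv : (v : V) ∈ A ∪ R := by
    have := v.2; exact_mod_cast this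
  rcases Finset.mem_union.mp hv with hvA | hvR
  · exact le_trans (key A R rfl hAR hvA) (le_max_left _ _)
  · exact le_trans (key R A (by rw [Finset.union_comm]) hAR' hvR) (le_max_right _ _)

lemma integrity_le_of_sep {V : Type*} [Fintype V] [DecidableEq V] (G : SimpleGraph V)
    (A R : Finset V) (hdisj : Disjoint A R)
    (hAR : ∀ a ∈ A, ∀ r ∈ R, ¬ G.Adj a r) :
    integrity G ≤ Fintype.card V - min A.card R.card := by
  classical
  set S : Finset V := (A ∪ R)ᶜ with hS_def
  have h1 : integrity G ≤ S.card + maxCompCard (G.induce ((↑S : Set V)ᶜ)) :=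
    Nat.sInf_le ⟨S, rfl⟩
  have hXeq : ((↑S : Set V)ᶜ) = (↑(A ∪ R) : Set V) := by
    rw [hS_def]; push_cast; rw [compl_compl]
  rw [hXeq] at h1
  have h2 : maxCompCard (G.induce (↑(A ∪ R) : Set V)) ≤ max A.card R.card :=
    maxCompCard_le _ _ (comp_supp_le G A R hAR)
  have hS : S.card = Fintype.card V - (A ∪ R).card := Finset.card_compl _
  have hcup : (A ∪ R).card = A.card + R.card := Finset.card_union_of_disjoint hdisj
  have hle : (A ∪ R).card ≤ Fintype.card V := by
    simpa using Finset.card_le_card (Finset.subset_univ (A ∪ R))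
  omega


-- tangent bound: log d ≤ log a + d/a - 1  for a > 0, d > 0
lemma log_tangent {d a : ℝ} (ha : 0 < a) (hd : 0 < d) :
    Real.log d ≤ Real.log a + d / a - 1 := by
  have h := Real.log_le_sub_one_of_pos (x := d / a) (by positivity)
  have hlog : Real.log (d / a) = Real.log d - Real.log a :=
    Real.log_div (ne_of_gt hd) (ne_of_gt ha)
  rw [hlog] at h
  linarith

lemma log_le_div_e {d : ℝ} (hd : 0 < d) : Real.log d ≤ d / Real.exp 1 := by
  have h := log_tangent (Real.exp_pos 1) hd
  rw [Real.log_exp] at h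
  linarith

-- Case A numeric lemma
lemma numA {d n : ℝ} (hd : 2 ≤ d) (hd16 : d ≤ 16) (hn : 48 * d ≤ n) :
    ((⌈Real.log d / (4 * d) * n⌉₊ : ℝ) ≤ (3 / 23) * n) ∧
    ((⌈Real.log d / (4 * d) * n⌉₊ : ℝ) * ((23 / 20) * d + 2) ≤ n) := by
  have hd0 : (0:ℝ) < d := by linarith
  have hn96 : (96:ℝ) ≤ n := by linarith
  have hn0 : (0:ℝ) < n := by linarith
  set z := Real.log d with hz_def
  have hz0 : 0 ≤ z := Real.log_nonneg (by linarith)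
  have hτ0 : 0 ≤ z / (4 * d) * n := by positivity
  have hceil : (⌈z / (4 * d) * n⌉₊ : ℝ) < z / (4 * d) * n + 1 := Nat.ceil_lt_add_one hτ0
  have he : (2.7182818 : ℝ) < Real.exp 1 := by
    have := Real.exp_one_gt_d9; linarith
  have hze : z ≤ d / Real.exp 1 := log_le_div_e hd0
  -- τ ≤ 1/(4e) ≤ 0.0919699  i.e. z ≤ 0.3678796*d
  have hzd : z ≤ 0.36787946 * d := by
    have h1 : d / Real.exp 1 ≤ d / 2.7182818 :=
      div_le_div_of_nonneg_left (by linarith) (by norm_num) (by linarith)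
    have h2 : d / 2.7182818 ≤ 0.36787946 * d := by
      rw [div_le_iff₀ (by norm_num : (0:ℝ) < 2.7182818)]; nlinarith
    linarith
  have hτ1 : z / (4 * d) * n ≤ 0.091969865 * n := by
    have : z / (4 * d) ≤ 0.091969865 := by
      rw [div_le_iff₀ (by positivity)]; nlinarith
    nlinarith
  constructor
  · -- t ≤ (3/23) n
    have : 0.091969865 * n + 1 ≤ (3/23) * n := by nlinarith
    linarith
  · -- t * ((23/20) d + 2) ≤ n
    have hC0 : (0:ℝ) < (23/20) * d + 2 := by linarith
    have hkey : (z / (4*d) * n + 1) * ((23/20) * d + 2) ≤ n := by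
      rcases le_total d 8 with h8 | h8
      · -- tangent at 4 : z ≤ 2 log 2 - 1 + d/4 ≤ 0.3862943616 + 0.25 d
        have htan := log_tangent (by norm_num : (0:ℝ) < 4) hd0
        have hl4 : Real.log 4 = 2 * Real.log 2 := by
          rw [show (4:ℝ) = 2^2 by norm_num, Real.log_pow]; push_cast; ring
        have hl2 := Real.log_two_lt_d9
        have hzt : z ≤ 0.3862943616 + 0.25 * d := by
          rw [hl4] at htan; rw [hz_def]; nlinarith
        -- Q(d) := 4d - (0.3862943616+0.25d)*((23/20)d+2) ≥ 4.18 on [2,8]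
        have hQ : (4.18:ℝ) ≤ 4*d - (0.3862943616 + 0.25*d) * ((23/20)*d + 2) := by
          nlinarith [mul_nonneg (by linarith : (0:ℝ) ≤ d - 2) (by linarith : (0:ℝ) ≤ 8 - d)]
        -- (z n + 4 d)((23/20)d+2) ≤ 4 d n
        have hmain : (z * n + 4 * d) * ((23/20) * d + 2) ≤ 4 * d * n := by
          have hzn : z * n ≤ (0.3862943616 + 0.25*d) * n := by nlinarith
          have h1 : (z * n + 4 * d) * ((23/20) * d + 2)
              ≤ ((0.3862943616 + 0.25*d) * n + 4 * d) * ((23/20) * d + 2) := by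
            nlinarith [mul_nonneg (by linarith : (0:ℝ) ≤ (0.3862943616 + 0.25*d) * n - z * n) (le_of_lt hC0)]
          have hprod : (0:ℝ) ≤ (n - 48*d) * (4*d - (0.3862943616 + 0.25*d) * ((23/20)*d + 2) - 4.18) :=
            mul_nonneg (by linarith) (by linarith)
          have hdd : (0:ℝ) ≤ d * (16 - d) := mul_nonneg (by linarith) (by linarith)
          have h2 : ((0.3862943616 + 0.25*d) * n + 4 * d) * ((23/20) * d + 2) ≤ 4 * d * n := by
            nlinarith [hprod, hdd, hQ]
          linarith
        -- divide by 4d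
        have h4d : (0:ℝ) < 4 * d := by linarith
        rw [← mul_le_mul_iff_right₀ h4d]
        calc 4 * d * ((z / (4*d) * n + 1) * ((23/20) * d + 2))
            = (4 * d * (z / (4*d)) * n + 4*d) * ((23/20) * d + 2) := by ring
          _ = (z * n + 4 * d) * ((23/20) * d + 2) := by
              rw [mul_div_cancel₀ _ (ne_of_gt h4d)]
          _ ≤ 4 * d * n := hmain
      · -- tangent at 16 : z ≤ 4 log 2 - 1 + d/16 ≤ 1.7725887232 + 0.0625 d
        have htan := log_tangent (by norm_num : (0:ℝ) < 16) hd0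
        have hl16 : Real.log 16 = 4 * Real.log 2 := by
          rw [show (16:ℝ) = 2^4 by norm_num, Real.log_pow]; push_cast; ring
        have hl2 := Real.log_two_lt_d9
        have hzt : z ≤ 1.7725887232 + 0.0625 * d := by
          rw [hl16] at htan; rw [hz_def]; nlinarith
        have hQ : (6.5:ℝ) ≤ 4*d - (1.7725887232 + 0.0625*d) * ((23/20)*d + 2) := by
          nlinarith [mul_nonneg (by linarith : (0:ℝ) ≤ d - 8) (by linarith : (0:ℝ) ≤ 16 - d)]
        have hmain : (z * n + 4 * d) * ((23/20) * d + 2) ≤ 4 * d * n := by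
          have hzn : z * n ≤ (1.7725887232 + 0.0625*d) * n := by nlinarith
          have h1 : (z * n + 4 * d) * ((23/20) * d + 2)
              ≤ ((1.7725887232 + 0.0625*d) * n + 4 * d) * ((23/20) * d + 2) := by
            nlinarith [mul_nonneg (by linarith : (0:ℝ) ≤ (1.7725887232 + 0.0625*d) * n - z * n) (le_of_lt hC0)]
          have hprod : (0:ℝ) ≤ (n - 48*d) * (4*d - (1.7725887232 + 0.0625*d) * ((23/20)*d + 2) - 6.5) :=
            mul_nonneg (by linarith) (by linarith)
          have hdd : (0:ℝ) ≤ d * (16 - d) := mul_nonneg (by linarith) (by linarith)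
          have h2 : ((1.7725887232 + 0.0625*d) * n + 4 * d) * ((23/20) * d + 2) ≤ 4 * d * n := by
            nlinarith [hprod, hdd, hQ]
          linarith
        have h4d : (0:ℝ) < 4 * d := by linarith
        rw [← mul_le_mul_iff_right₀ h4d]
        calc 4 * d * ((z / (4*d) * n + 1) * ((23/20) * d + 2))
            = (4 * d * (z / (4*d)) * n + 4*d) * ((23/20) * d + 2) := by ring
          _ = (z * n + 4 * d) * ((23/20) * d + 2) := by
              rw [mul_div_cancel₀ _ (ne_of_gt h4d)]
          _ ≤ 4 * d * n := hmain
    nlinarith [hceil, hC0]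


lemma log_tangent' {d a : ℝ} (ha : 0 < a) (hd : 0 < d) :
    Real.log d ≤ Real.log a + d / a - 1 := log_tangent ha hd

section casea
variable {V : Type*} [Fintype V] [DecidableEq V]

lemma exists_sep_A (G : SimpleGraph V) [DecidableRel G.Adj]
    (d : ℝ) (hd : 2 ≤ d) (hd16 : d ≤ 16) (hn : 48 * d ≤ (Fintype.card V : ℝ))
    (hdeg : ∑ v : V, ((G.degree v : ℝ)) ≤ d * (Fintype.card V : ℝ))
    (hta : ((⌈Real.log d / (4 * d) * ((Fintype.card V : ℕ) : ℝ)⌉₊ : ℝ) ≤ (3 / 23) * ((Fintype.card V : ℕ) : ℝ)))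
    (htb : ((⌈Real.log d / (4 * d) * ((Fintype.card V : ℕ) : ℝ)⌉₊ : ℝ) * ((23 / 20) * d + 2) ≤ ((Fintype.card V : ℕ) : ℝ))) :
    ∃ A R : Finset V, Disjoint A R ∧ (∀ a ∈ A, ∀ r ∈ R, ¬ G.Adj a r) ∧
      ⌈Real.log d / (4 * d) * ((Fintype.card V : ℕ) : ℝ)⌉₊ ≤ A.card ∧
      ⌈Real.log d / (4 * d) * ((Fintype.card V : ℕ) : ℝ)⌉₊ ≤ R.card := by
  classical
  set n := Fintype.card V with hn_def
  set t := ⌈Real.log d / (4 * d) * (n : ℝ)⌉₊ with ht_def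
  have hd0 : (0:ℝ) < d := by linarith
  set low := Finset.univ.filter (fun v : V => (G.degree v : ℝ) ≤ (23/20) * d) with hlow_def
  have hlowcard : (3/23) * (n:ℝ) ≤ low.card := by
    set high := Finset.univ.filter (fun v : V => ¬ ((G.degree v : ℝ) ≤ (23/20) * d)) with hhigh_def
    have hsum1 : (high.card : ℝ) * ((23/20) * d) ≤ ∑ v ∈ high, (G.degree v : ℝ) := by
      have h := Finset.card_nsmul_le_sum high (fun v => (G.degree v : ℝ)) ((23/20)*d)
        (fun x hx => le_of_lt (not_le.mp (Finset.mem_filter.mp hx).2))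
      simpa [nsmul_eq_mul] using h
    have hsum2 : ∑ v ∈ high, (G.degree v:ℝ) ≤ ∑ v : V, (G.degree v:ℝ) :=
      Finset.sum_le_sum_of_subset_of_nonneg (Finset.subset_univ _) (fun i _ _ => by positivity)
    have hhigh : (high.card : ℝ) ≤ (20/23) * (n:ℝ) := by nlinarith
    have hsplit : low.card + high.card = n := by
      rw [hlow_def, hhigh_def, Finset.card_filter_add_card_filter_not, Finset.card_univ]
    have hcast : (low.card:ℝ) + (high.card:ℝ) = (n:ℝ) := by exact_mod_cast congrArg (Nat.cast : ℕ → ℝ) hsplit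
    linarith
  have htlow : t ≤ low.card := by
    have h : (t:ℝ) ≤ (low.card:ℝ) := le_trans hta hlowcard
    exact_mod_cast h
  obtain ⟨A, hAsub, hAcard⟩ := Finset.exists_subset_card_eq htlow
  set NA := A.biUnion (fun a => insert a (G.neighborFinset a)) with hNA_def
  have hNAcard : (NA.card : ℝ) ≤ (t:ℝ) * ((23/20) * d + 1) := by
    have h1 : NA.card ≤ ∑ a ∈ A, (insert a (G.neighborFinset a)).card := Finset.card_biUnion_le
    have h2 : ∀ a ∈ A, ((insert a (G.neighborFinset a)).card : ℝ) ≤ (23/20)*d + 1 := by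
      intro a ha
      have hdeg_a : (G.degree a : ℝ) ≤ (23/20)*d := (Finset.mem_filter.mp (hAsub ha)).2
      have h3 : (insert a (G.neighborFinset a)).card ≤ G.degree a + 1 := by
        have := Finset.card_insert_le a (G.neighborFinset a)
        simpa [G.card_neighborFinset_eq_degree] using this
      have h4 : ((insert a (G.neighborFinset a)).card : ℝ) ≤ (G.degree a : ℝ) + 1 := by
        exact_mod_cast h3
      linarith
    have h5 : ∑ a ∈ A, ((insert a (G.neighborFinset a)).card : ℝ) ≤ A.card • ((23/20)*d + 1) :=
      Finset.sum_le_card_nsmul A _ _ h2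
    have h6 : (NA.card : ℝ) ≤ ∑ a ∈ A, ((insert a (G.neighborFinset a)).card : ℝ) := by
      exact_mod_cast h1
    rw [nsmul_eq_mul, hAcard] at h5
    linarith
  set R := NAᶜ with hR_def
  have hsubAN : A ⊆ NA := fun a ha => Finset.mem_biUnion.mpr ⟨a, ha, Finset.mem_insert_self _ _⟩
  have hNAn : NA.card ≤ n := Finset.card_le_univ NA
  have hRcard : (t:ℝ) ≤ (R.card:ℝ) := by
    have h1 : (R.card:ℝ) = (n:ℝ) - (NA.card:ℝ) := by
      rw [hR_def, Finset.card_compl, hn_def]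
      exact Nat.cast_sub hNAn
    rw [h1]
    nlinarith [hNAcard, htb]
  have hdisj : Disjoint A R := by
    rw [Finset.disjoint_left]
    intro a ha haR
    exact (Finset.mem_compl.mp haR) (hsubAN ha)
  have hadjf : ∀ a ∈ A, ∀ r ∈ R, ¬ G.Adj a r := by
    intro a ha r hr hadj
    apply Finset.mem_compl.mp hr
    exact Finset.mem_biUnion.mpr ⟨a, ha, Finset.mem_insert_of_mem ((G.mem_neighborFinset a r).mpr hadj)⟩
  exact ⟨A, R, hdisj, hadjf, le_of_eq hAcard.symm, by exact_mod_cast hRcard⟩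

end casea

section chooseRatio
lemma choose_pred_mul (m t : ℕ) :
    m * (m - 1).choose t = (m - t) * m.choose t := by
  cases m with
  | zero => simp
  | succ k =>
    have h1 := Nat.add_one_mul_choose_eq k t
    have h2 := Nat.choose_succ_right_eq (k + 1) t
    simp only [Nat.succ_eq_add_one, Nat.add_sub_cancel] at *
    calc (k + 1) * k.choose t = (k + 1).choose (t + 1) * (t + 1) := by rw [h1]
      _ = (k + 1).choose t * (k + 1 - t) := h2
      _ = (k + 1 - t) * (k + 1).choose t := by ring

lemma choose_ratio {n t : ℕ} {θ : ℝ} (hθ0 : 0 ≤ θ) :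
    ∀ k : ℕ, k + 1 ≤ n →
    (∀ j : ℕ, j ≤ k → θ * ((n : ℝ) - j) ≤ ((n : ℝ) - j) - t) →
    θ ^ (k + 1) * (n.choose t : ℝ) ≤ ((n - (k + 1)).choose t : ℝ) := by
  intro k
  induction k with
  | zero =>
    intro hk hθ
    have h0 := hθ 0 le_rfl
    simp only [Nat.cast_zero, sub_zero] at h0
    have hn1 : (1 : ℝ) ≤ n := by exact_mod_cast hk
    have htn : (t : ℝ) ≤ n := by nlinarith
    have htn' : t ≤ n := by exact_mod_cast htn
    have hid : (n : ℝ) * ((n - 1).choose t : ℝ) = ((n : ℝ) - t) * (n.choose t : ℝ) := by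
      have h := choose_pred_mul n t
      have hc : ((n - t : ℕ) : ℝ) = (n : ℝ) - t := by rw [Nat.cast_sub htn']
      calc (n : ℝ) * ((n - 1).choose t : ℝ) = ((n * (n - 1).choose t : ℕ) : ℝ) := by push_cast; ring
        _ = (((n - t) * n.choose t : ℕ) : ℝ) := by rw [h]
        _ = ((n : ℝ) - t) * (n.choose t : ℝ) := by rw [Nat.cast_mul, hc]
    have hnpos : (0 : ℝ) < n := by linarith
    have hC : (0 : ℝ) ≤ (n.choose t : ℝ) := Nat.cast_nonneg _
    rw [pow_one]
    nlinarith
  | succ k ih =>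
    intro hk hθ
    have ih' := ih (by omega) (fun j hj => hθ j (by omega))
    set m : ℕ := n - (k + 1) with hm_def
    have hm1 : 1 ≤ m := by omega
    have hmcast : (m : ℝ) = (n : ℝ) - (k + 1) := by
      rw [hm_def, Nat.cast_sub (by omega)]; push_cast; ring
    have hstep := hθ (k + 1) le_rfl
    have hθm : θ * (m : ℝ) ≤ (m : ℝ) - t := by
      rw [hmcast]; push_cast at hstep ⊢; convert hstep using 2
    have htm : (t : ℝ) ≤ m := by nlinarith [hθ0, hm1, (by exact_mod_cast hm1 : (1:ℝ) ≤ (m:ℝ))]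
    have htm' : t ≤ m := by exact_mod_cast htm
    have hid : (m : ℝ) * ((m - 1).choose t : ℝ) = ((m : ℝ) - t) * (m.choose t : ℝ) := by
      have h := choose_pred_mul m t
      have hc : ((m - t : ℕ) : ℝ) = (m : ℝ) - t := by rw [Nat.cast_sub htm']
      calc (m : ℝ) * ((m - 1).choose t : ℝ) = ((m * (m - 1).choose t : ℕ) : ℝ) := by push_cast; ring
        _ = (((m - t) * m.choose t : ℕ) : ℝ) := by rw [h]
        _ = ((m : ℝ) - t) * (m.choose t : ℝ) := by rw [Nat.cast_mul, hc]
    have hmpos : (0 : ℝ) < m := by exact_mod_cast hm1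
    have hgoal_eq : n - (k + 1 + 1) = m - 1 := by omega
    rw [hgoal_eq]
    have hCm : (0 : ℝ) ≤ (m.choose t : ℝ) := Nat.cast_nonneg _
    have s1 : θ ^ (k + 1 + 1) * (n.choose t : ℝ) ≤ θ * (m.choose t : ℝ) := by
      have h := mul_le_mul_of_nonneg_left ih' hθ0
      calc θ ^ (k + 1 + 1) * (n.choose t : ℝ) = θ * (θ ^ (k + 1) * (n.choose t : ℝ)) := by ring
        _ ≤ θ * (m.choose t : ℝ) := h
    have s2 : θ * (m.choose t : ℝ) ≤ ((m - 1).choose t : ℝ) := by nlinarith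
    linarith
end chooseRatio

section numB
lemma exp_ge_e_mul (x : ℝ) (hx : 0 ≤ x) : 2.7182818 * x ≤ Real.exp x := by
  have h1 : x ≤ Real.exp (x - 1) := by
    have := Real.add_one_le_exp (x - 1); linarith
  have he : (2.7182818:ℝ) ≤ Real.exp 1 := by
    have := Real.exp_one_gt_d9; linarith
  calc 2.7182818 * x ≤ Real.exp 1 * x := by nlinarith
    _ ≤ Real.exp 1 * Real.exp (x - 1) := by
        have := Real.exp_pos 1; nlinarith
    _ = Real.exp x := by rw [← Real.exp_add]; ring_nf

lemma numB {d n t K θ : ℝ} (hd : 16 ≤ d) (hn : 48 * d ≤ n)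
    (ht0 : Real.log d / (4 * d) * n ≤ t)
    (ht : t ≤ Real.log d / (4 * d) * n + 1)
    (hθ : θ = 1 - 16 * t / (15 * n))
    (hK0 : 0 ≤ K) (hK2 : K ≤ 2 * d + 2) :
    0.9 ≤ θ ∧ t ≤ n / 2 * Real.exp (K * Real.log θ) := by
  have hd0 : (0:ℝ) < d := by linarith
  have hn0 : (0:ℝ) < n := by linarith
  set z := Real.log d with hz_def
  have hz16 : (2.7725887212:ℝ) ≤ z := by
    have h16 : Real.log 16 ≤ z := Real.log_le_log (by norm_num) hd
    have hl16 : Real.log 16 = 4 * Real.log 2 := by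
      rw [show (16:ℝ) = 2^4 by norm_num, Real.log_pow]; push_cast; ring
    have := Real.log_two_gt_d9
    rw [hl16] at h16; linarith
  have hz0 : (0:ℝ) < z := by linarith
  have hzlin : z ≤ 0.1732868 * d := by
    have htan := log_tangent' (by norm_num : (0:ℝ) < 16) hd0
    have hl16 : Real.log 16 = 4 * Real.log 2 := by
      rw [show (16:ℝ) = 2^4 by norm_num, Real.log_pow]; push_cast; ring
    have hl2 := Real.log_two_lt_d9
    rw [hl16] at htan
    have hz1 : z ≤ 1.7725887232 + d / 16 := by rw [hz_def]; nlinarith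
    nlinarith
  set T := z / (4 * d) * n with hT_def
  have h4d : (0:ℝ) < 4 * d := by linarith
  have hTz : 4 * d * T = z * n := by rw [hT_def]; field_simp
  have hT33 : (33.27:ℝ) ≤ T := by nlinarith
  have hT0 : (0:ℝ) < T := by linarith
  have htT : t ≤ 1.0300572 * T := by linarith
  have hTn : T ≤ 0.0433217 * n := by nlinarith
  have htn : t ≤ 0.0446238 * n := by nlinarith
  have ht1 : (0:ℝ) < t := by linarith
  -- θ bounds
  have hfrac_eq : 16 * t / (15 * n) * (15 * n) = 16 * t := by field_simp
  have hfrac : 16 * t / (15 * n) ≤ 0.0475988 := by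
    rw [div_le_iff₀ (by positivity)]; nlinarith
  have hfrac0 : 0 ≤ 16 * t / (15 * n) := by positivity
  have hθ95 : 0.9524 ≤ θ := by rw [hθ]; linarith
  have hθ1 : θ ≤ 1 := by
    rw [hθ]; linarith
  have hθ0 : (0:ℝ) < θ := by linarith
  refine ⟨by linarith, ?_⟩
  set L := - Real.log θ with hL_def
  have hL0 : 0 ≤ L := by
    have : Real.log θ ≤ 0 := Real.log_nonpos (by linarith) hθ1
    rw [hL_def]; linarith
  have hLθ : L * θ ≤ 1 - θ := by
    have h1 := Real.log_le_sub_one_of_pos (x := θ⁻¹) (by positivity)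
    rw [Real.log_inv] at h1
    have h2 : θ * θ⁻¹ = 1 := mul_inv_cancel₀ (ne_of_gt hθ0)
    calc L * θ ≤ (θ⁻¹ - 1) * θ := by
          apply mul_le_mul_of_nonneg_right _ (le_of_lt hθ0)
          rw [hL_def]; linarith
      _ = 1 - θ := by field_simp
  have hLn : L * n ≤ 1.11998 * t := by
    have h1 : 0.9524 * L ≤ L * θ := by nlinarith
    have h2 : 1 - θ = 16 * t / (15 * n) := by rw [hθ]; ring
    have h3 : 0.9524 * L * (15 * n) ≤ 16 * t := by
      have h4 : 0.9524 * L ≤ 16 * t / (15 * n) := by rw [← h2]; exact le_trans h1 hLθ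
      calc 0.9524 * L * (15 * n) ≤ (16 * t / (15 * n)) * (15 * n) := by nlinarith
        _ = 16 * t := hfrac_eq
    nlinarith
  have hKL : K * L ≤ 0.613 * z := by
    have h1 : K * L * n ≤ (2*d+2) * (1.11998 * t) := by
      have := mul_le_mul hK2 hLn (by positivity) (by linarith)
      nlinarith [this]
    have h2 : (2*d+2) * (1.11998 * t) ≤ (2*d+2) * (1.11998 * (1.0300572 * T)) := by
      nlinarith
    have h3 : (2*d+2) * (1.11998 * (1.0300572 * T)) ≤ 2.452 * d * T := by nlinarith
    have h4 : 2.452 * d * T = 0.613 * z * n := by nlinarith [hTz]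
    have h5 : K * L * n ≤ 0.613 * z * n := by linarith
    nlinarith [h5, hn0]
  obtain ⟨F, hF⟩ : ∃ F, Real.exp (K * Real.log θ) = F := ⟨_, rfl⟩
  obtain ⟨E, hE⟩ : ∃ E, Real.exp (-(0.613 * z)) = E := ⟨_, rfl⟩
  have hexpmono : E ≤ F := by
    rw [← hE, ← hF]
    apply Real.exp_le_exp.mpr
    have hKθ : K * Real.log θ = -(K * L) := by rw [hL_def]; ring
    rw [hKθ]; linarith
  have hde : d * E = Real.exp (0.387 * z) := by
    rw [← hE]
    have hdz : d = Real.exp z := (Real.exp_log hd0).symm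
    rw [hdz, ← Real.exp_add]; ring_nf
  have hge : 1.0519 * z ≤ d * E := by
    rw [hde]
    have := exp_ge_e_mul (0.387 * z) (by positivity)
    nlinarith
  have hE0 : 0 < E := by rw [← hE]; exact Real.exp_pos _
  have h1 : n * (1.0519 * z) ≤ n * (d * E) :=
    mul_le_mul_of_nonneg_left hge (le_of_lt hn0)
  have h2 : n * (1.0519 * z) = 1.0519 * (4 * d * T) := by rw [hTz]; ring
  have h3 : d * (4.2076 * T) ≤ d * (n * E) := by nlinarith [h1, h2]
  have h4 : 4.2076 * T ≤ n * E := le_of_mul_le_mul_left h3 hd0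
  have h5 : n / 2 * E = (n * E) / 2 := by ring
  have hfin : t ≤ n / 2 * E := by rw [h5]; linarith
  have hmono : n / 2 * E ≤ n / 2 * F :=
    mul_le_mul_of_nonneg_left hexpmono (by linarith)
  rw [hF]
  linarith

end numB

section caseb
variable {V : Type*} [Fintype V] [DecidableEq V]

lemma exists_sep_B (G : SimpleGraph V) [DecidableRel G.Adj]
    (d : ℝ) (hd16 : 16 ≤ d) (hn : 48 * d ≤ (Fintype.card V : ℝ))
    (hdeg : ∑ v : V, ((G.degree v : ℝ)) ≤ d * (Fintype.card V : ℝ)) :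
    ∃ A R : Finset V, Disjoint A R ∧ (∀ a ∈ A, ∀ r ∈ R, ¬ G.Adj a r) ∧
      ⌈Real.log d / (4 * d) * ((Fintype.card V : ℕ) : ℝ)⌉₊ ≤ A.card ∧
      ⌈Real.log d / (4 * d) * ((Fintype.card V : ℕ) : ℝ)⌉₊ ≤ R.card := by
  classical
  set n := Fintype.card V with hn_def
  set t := ⌈Real.log d / (4 * d) * (n : ℝ)⌉₊ with ht_def
  have hd0 : (0:ℝ) < d := by linarith
  have hz0 : 0 < Real.log d := Real.log_pos (by linarith)
  have hn0 : (0:ℝ) < n := by linarith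
  have htlb : Real.log d / (4*d) * (n:ℝ) ≤ (t:ℝ) := Nat.le_ceil _
  have htub : (t:ℝ) ≤ Real.log d / (4*d) * (n:ℝ) + 1 :=
    le_of_lt (Nat.ceil_lt_add_one (by positivity))
  have ht1 : 1 ≤ t := Nat.one_le_ceil_iff.mpr (by positivity)
  set cap : ℕ := ⌊2*d⌋₊ + 1 with hcap_def
  set K : ℕ := cap + 1 with hK_def
  have hcapR : (cap:ℝ) ≤ 2*d + 1 := by
    rw [hcap_def]; push_cast
    linarith [Nat.floor_le (by positivity : (0:ℝ) ≤ 2*d)]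
  have hKR : (K:ℝ) ≤ 2*d + 2 := by
    rw [hK_def, hcap_def]; push_cast
    linarith [Nat.floor_le (by positivity : (0:ℝ) ≤ 2*d)]
  obtain ⟨θ, hθ_def⟩ : ∃ θ : ℝ, θ = 1 - 16 * (t:ℝ) / (15 * (n:ℝ)) := ⟨_, rfl⟩
  obtain ⟨hθ9, hmain⟩ := numB hd16 hn htlb htub hθ_def (by positivity) hKR
  have hθ0 : (0:ℝ) ≤ θ := by linarith
  have hθpos : (0:ℝ) < θ := by linarith
  have hθ1 : θ ≤ 1 := by
    rw [hθ_def]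
    have h : (0:ℝ) ≤ 16*(t:ℝ)/(15*(n:ℝ)) := by positivity
    linarith
  -- t ≤ n
  have hexp1 : Real.exp ((K:ℝ) * Real.log θ) ≤ 1 := by
    rw [Real.exp_le_one_iff]
    have hlog : Real.log θ ≤ 0 := Real.log_nonpos (by linarith) hθ1
    exact mul_nonpos_of_nonneg_of_nonpos (by positivity) hlog
  have htn : t ≤ n := by
    have h1 : (t:ℝ) ≤ (n:ℝ)/2 * 1 := le_trans hmain (by
      apply mul_le_mul_of_nonneg_left hexp1 (by linarith))
    have h2 : (t:ℝ) ≤ (n:ℝ) := by linarith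
    exact_mod_cast h2
  have hcap16 : 16 * (cap:ℝ) ≤ (n:ℝ) := by nlinarith
  have hθj : ∀ j : ℕ, j ≤ cap → θ * ((n:ℝ) - j) ≤ ((n:ℝ) - j) - t := by
    intro j hj
    have hjr : (j:ℝ) ≤ (cap:ℝ) := by exact_mod_cast hj
    have h16j : 16 * (j:ℝ) ≤ (n:ℝ) := by linarith
    have ht0' : (0:ℝ) < t := by exact_mod_cast ht1
    rw [hθ_def]
    have hexpand : (1 - 16*(t:ℝ)/(15*(n:ℝ))) * ((n:ℝ) - j)
        = ((n:ℝ) - j) - (16*(t:ℝ)*((n:ℝ) - j))/(15*(n:ℝ)) := by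
      field_simp
    rw [hexpand]
    have hkey : (t:ℝ) ≤ (16*(t:ℝ)*((n:ℝ) - j))/(15*(n:ℝ)) := by
      rw [le_div_iff₀ (by positivity)]
      nlinarith [mul_nonneg (le_of_lt ht0') (by linarith : (0:ℝ) ≤ 16*((n:ℝ) - j) - 15*(n:ℝ))]
    linarith
  -- good vertices
  set good := Finset.univ.filter (fun v : V => (G.degree v : ℝ) ≤ 2*d + 1) with hgood_def
  have hgoodcard : (n:ℝ)/2 ≤ good.card := by
    set bad := Finset.univ.filter (fun v : V => ¬ ((G.degree v:ℝ) ≤ 2*d+1)) with hbad_def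
    have hsum1 : (bad.card:ℝ) * (2*d) ≤ ∑ v ∈ bad, (G.degree v:ℝ) := by
      have h := Finset.card_nsmul_le_sum bad (fun v => (G.degree v:ℝ)) (2*d)
        (fun x hx => by
          have h2 := not_le.mp (Finset.mem_filter.mp hx).2
          linarith)
      simpa [nsmul_eq_mul] using h
    have hsum2 : ∑ v ∈ bad, (G.degree v:ℝ) ≤ ∑ v : V, (G.degree v:ℝ) :=
      Finset.sum_le_sum_of_subset_of_nonneg (Finset.subset_univ _) (fun i _ _ => by positivity)
    have hbad : (bad.card:ℝ) ≤ (n:ℝ)/2 := by nlinarith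
    have hsplit : good.card + bad.card = n := by
      rw [hgood_def, hbad_def, Finset.card_filter_add_card_filter_not, Finset.card_univ]
    have hcast : (good.card:ℝ) + (bad.card:ℝ) = (n:ℝ) := by
      exact_mod_cast congrArg (Nat.cast : ℕ → ℝ) hsplit
    linarith
  have hdegcap : ∀ v ∈ good, G.degree v ≤ cap := by
    intro v hv
    have h1 : (G.degree v:ℝ) ≤ 2*d+1 := (Finset.mem_filter.mp hv).2
    have h2 : (2*d:ℝ) < (⌊2*d⌋₊:ℝ) + 1 := Nat.lt_floor_add_one _
    have h3 : (G.degree v : ℝ) < (cap:ℝ) + 1 := by rw [hcap_def]; push_cast; linarith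
    have h4 : G.degree v < cap + 1 := by exact_mod_cast h3
    omega
  have hcapn : cap + 1 ≤ n := by
    have h : (cap:ℝ) + 1 ≤ (n:ℝ) := by nlinarith
    exact_mod_cast h
  -- per-vertex bound
  have hper : ∀ v ∈ good,
      θ^K * (n.choose t : ℝ) ≤ ((n - (G.degree v + 1)).choose t : ℝ) := by
    intro v hv
    have hdv := hdegcap v hv
    have h1 : θ^(G.degree v + 1) * (n.choose t : ℝ) ≤ ((n - (G.degree v + 1)).choose t : ℝ) :=
      choose_ratio hθ0 (G.degree v) (by omega) (fun j hj => hθj j (le_trans hj hdv))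
    have h2 : θ^K ≤ θ^(G.degree v + 1) :=
      pow_le_pow_of_le_one hθ0 hθ1 (by omega)
    have hC0 : (0:ℝ) ≤ (n.choose t : ℝ) := Nat.cast_nonneg _
    calc θ^K * (n.choose t : ℝ) ≤ θ^(G.degree v + 1) * (n.choose t : ℝ) :=
          mul_le_mul_of_nonneg_right h2 hC0
      _ ≤ _ := h1
  -- counting
  set Mv : V → Finset V := fun v => insert v (G.neighborFinset v) with hMv_def
  have hMvcard : ∀ v : V, (Mv v).card = G.degree v + 1 := by
    intro v
    rw [hMv_def]
    rw [Finset.card_insert_of_notMem (G.notMem_neighborFinset_self v),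
      G.card_neighborFinset_eq_degree]
  set P := Finset.powersetCard t (Finset.univ : Finset V) with hP_def
  have hPcard : P.card = n.choose t := by
    rw [hP_def, Finset.card_powersetCard, Finset.card_univ]
  have hcount : ∑ A ∈ P, (Finset.univ.filter (fun v => Disjoint (Mv v) A)).card
      = ∑ v : V, (n - (G.degree v + 1)).choose t := by
    have h1 : ∀ A : Finset V, (Finset.univ.filter (fun v => Disjoint (Mv v) A)).card
        = ∑ v : V, if Disjoint (Mv v) A then 1 else 0 := fun A => Finset.card_filter _ _
    rw [Finset.sum_congr rfl (fun A _ => h1 A), Finset.sum_comm]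
    apply Finset.sum_congr rfl
    intro v _
    have h2 : ∑ A ∈ P, (if Disjoint (Mv v) A then 1 else 0)
        = (P.filter (fun A => Disjoint (Mv v) A)).card := (Finset.card_filter _ _).symm
    rw [h2]
    have h3 : P.filter (fun A => Disjoint (Mv v) A) = Finset.powersetCard t ((Mv v)ᶜ) := by
      ext B
      simp only [hP_def, Finset.mem_filter, Finset.mem_powersetCard]
      constructor
      · rintro ⟨⟨-, hBcard⟩, hdisj⟩
        refine ⟨fun x hx => Finset.mem_compl.mpr (fun hxM => ?_), hBcard⟩
        exact (Finset.disjoint_right.mp hdisj hx) hxM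
      · rintro ⟨hBsub, hBcard⟩
        refine ⟨⟨Finset.subset_univ _, hBcard⟩, ?_⟩
        rw [Finset.disjoint_right]
        intro x hx
        exact Finset.mem_compl.mp (hBsub hx)
    rw [h3, Finset.card_powersetCard, Finset.card_compl, hMvcard]
  -- lower bound for the sum
  have hexpθ : Real.exp ((K:ℝ) * Real.log θ) = θ^K := by
    rw [Real.exp_nat_mul, Real.exp_log hθpos]
  have hmain' : (t:ℝ) ≤ (n:ℝ)/2 * θ^K := by rw [← hexpθ]; exact hmain
  have hC0 : (0:ℝ) ≤ (n.choose t : ℝ) := Nat.cast_nonneg _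
  have hθK0 : (0:ℝ) ≤ θ^K := pow_nonneg hθ0 K
  have hsumlb : (t:ℝ) * (n.choose t : ℝ) ≤ ∑ v : V, ((n - (G.degree v + 1)).choose t : ℝ) := by
    have h1 : ∑ v ∈ good, θ^K * (n.choose t : ℝ)
        ≤ ∑ v ∈ good, ((n - (G.degree v + 1)).choose t : ℝ) := Finset.sum_le_sum hper
    have h2 : ∑ v ∈ good, θ^K * (n.choose t : ℝ) = (good.card:ℝ) * (θ^K * (n.choose t : ℝ)) := by
      rw [Finset.sum_const, nsmul_eq_mul]
    have h3 : ∑ v ∈ good, ((n - (G.degree v + 1)).choose t : ℝ)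
        ≤ ∑ v : V, ((n - (G.degree v + 1)).choose t : ℝ) :=
      Finset.sum_le_sum_of_subset_of_nonneg (Finset.subset_univ _) (fun i _ _ => Nat.cast_nonneg _)
    have h4 : (t:ℝ) * (n.choose t : ℝ) ≤ ((n:ℝ)/2) * (θ^K * (n.choose t : ℝ)) := by
      calc (t:ℝ) * (n.choose t : ℝ) ≤ ((n:ℝ)/2 * θ^K) * (n.choose t : ℝ) :=
            mul_le_mul_of_nonneg_right hmain' hC0
        _ = ((n:ℝ)/2) * (θ^K * (n.choose t : ℝ)) := by ring
    have h5 : ((n:ℝ)/2) * (θ^K * (n.choose t : ℝ)) ≤ (good.card:ℝ) * (θ^K * (n.choose t : ℝ)) :=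
      mul_le_mul_of_nonneg_right hgoodcard (by positivity)
    linarith
  -- pigeonhole
  have hsum_nat : t * n.choose t ≤ ∑ A ∈ P, (Finset.univ.filter (fun v => Disjoint (Mv v) A)).card := by
    rw [hcount]
    have : ((t * n.choose t : ℕ):ℝ) ≤ ((∑ v : V, (n - (G.degree v + 1)).choose t : ℕ):ℝ) := by
      push_cast
      exact hsumlb
    exact_mod_cast this
  have hC1 : 1 ≤ n.choose t := Nat.choose_pos htn
  have hex : ∃ A ∈ P, t ≤ (Finset.univ.filter (fun v => Disjoint (Mv v) A)).card := by
    by_contra hcon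
    push_neg at hcon
    have hub : ∑ A ∈ P, (Finset.univ.filter (fun v => Disjoint (Mv v) A)).card
        ≤ P.card * (t - 1) := by
      have := Finset.sum_le_card_nsmul P
        (fun A => (Finset.univ.filter (fun v => Disjoint (Mv v) A)).card) (t-1)
        (fun A hA => Nat.le_sub_one_of_lt (hcon A hA))
      simpa [smul_eq_mul] using this
    rw [hPcard] at hub
    have hfin : t * n.choose t ≤ n.choose t * (t - 1) := le_trans hsum_nat hub
    have hexpand : n.choose t * (t - 1) + n.choose t = n.choose t * t := by
      have : t - 1 + 1 = t := by omega
      calc n.choose t * (t - 1) + n.choose t = n.choose t * (t - 1 + 1) := by ring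
        _ = n.choose t * t := by rw [this]
    have : t * n.choose t = n.choose t * t := by ring
    omega
  obtain ⟨A, hAP, hFA⟩ := hex
  set R := Finset.univ.filter (fun v => Disjoint (Mv v) A) with hR_def
  have hAcard : A.card = t := (Finset.mem_powersetCard.mp (by rwa [hP_def] at hAP)).2
  have hdisj : Disjoint A R := by
    rw [Finset.disjoint_left]
    intro a ha haR
    have hdis := (Finset.mem_filter.mp haR).2
    exact (Finset.disjoint_left.mp hdis (by rw [hMv_def]; exact Finset.mem_insert_self a _)) ha
  have hadjf : ∀ a ∈ A, ∀ r ∈ R, ¬ G.Adj a r := by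
    intro a ha r hr hadj
    have hdis := (Finset.mem_filter.mp hr).2
    have haM : a ∈ Mv r := by
      rw [hMv_def]
      exact Finset.mem_insert_of_mem ((G.mem_neighborFinset r a).mpr hadj.symm)
    exact (Finset.disjoint_left.mp hdis haM) ha
  exact ⟨A, R, hdisj, hadjf, le_of_eq hAcard.symm, hFA⟩

end caseb


/-- Every graph on `n` vertices of average degree at most `d`, with `d ≥ 2` and
`n ≥ 48d`, has vertex integrity at most `(1 - (log d)/(4d)) n`. -/
theorem stmt11 {V : Type*} [Fintype V] (G : SimpleGraph V) (d : ℝ) (hd : 2 ≤ d)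
    (hn : 48 * d ≤ (Fintype.card V : ℝ))
    (hdeg : 2 * (G.edgeSet.ncard : ℝ) ≤ d * (Fintype.card V : ℝ)) :
    (integrity G : ℝ) ≤ (1 - Real.log d / (4 * d)) * (Fintype.card V : ℝ) := by
  classical
  have hd0 : (0:ℝ) < d := by linarith
  have hDS : ∑ v : V, ((G.degree v : ℝ)) ≤ d * ((Fintype.card V : ℕ) : ℝ) := by
    have h1 : ∑ v : V, G.degree v = 2 * G.edgeFinset.card := G.sum_degrees_eq_twice_card_edges
    have h2 : G.edgeSet.ncard = G.edgeFinset.card := by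
      rw [← Set.ncard_coe_finset, G.coe_edgeFinset]
    calc ∑ v : V, ((G.degree v : ℝ)) = ((∑ v : V, G.degree v : ℕ) : ℝ) := by push_cast; rfl
      _ = 2 * (G.edgeFinset.card : ℝ) := by rw [h1]; push_cast; ring
      _ = 2 * (G.edgeSet.ncard : ℝ) := by rw [h2]
      _ ≤ d * ((Fintype.card V : ℕ) : ℝ) := hdeg
  obtain ⟨A, R, hdisj, hadjf, hA, hR⟩ :
      ∃ A R : Finset V, Disjoint A R ∧ (∀ a ∈ A, ∀ r ∈ R, ¬ G.Adj a r) ∧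
        ⌈Real.log d / (4 * d) * ((Fintype.card V : ℕ) : ℝ)⌉₊ ≤ A.card ∧
        ⌈Real.log d / (4 * d) * ((Fintype.card V : ℕ) : ℝ)⌉₊ ≤ R.card := by
    rcases le_total d 16 with h16 | h16
    · obtain ⟨hta, htb⟩ := numA hd h16 hn
      exact exists_sep_A G d hd h16 hn hDS hta htb
    · exact exists_sep_B G d h16 hn hDS
  set n := Fintype.card V with hn_def
  set t := ⌈Real.log d / (4 * d) * ((n : ℕ) : ℝ)⌉₊ with ht_def
  have h1 : integrity G ≤ n - min A.card R.card := integrity_le_of_sep G A R hdisj hadjf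
  have h2 : integrity G ≤ n - t := le_trans h1 (Nat.sub_le_sub_left (le_min hA hR) n)
  have htn : t ≤ n := le_trans hA (Finset.card_le_univ A)
  have hcast : ((n - t : ℕ) : ℝ) = ((n:ℕ):ℝ) - ((t:ℕ):ℝ) := by
    exact Nat.cast_sub htn
  have htlb : Real.log d / (4*d) * ((n:ℕ):ℝ) ≤ ((t:ℕ):ℝ) := Nat.le_ceil _
  calc (integrity G : ℝ) ≤ ((n - t : ℕ) : ℝ) := by exact_mod_cast h2
    _ = ((n:ℕ):ℝ) - ((t:ℕ):ℝ) := hcast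
    _ ≤ ((n:ℕ):ℝ) - Real.log d / (4*d) * ((n:ℕ):ℝ) := by linarith
    _ = (1 - Real.log d / (4*d)) * ((n:ℕ):ℝ) := by ring
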